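/- Let ψ : ℝ × ℝ³ → ℂ³ be a C³ vector field each of whose components satisfies the wave equation ∂_t²ψ(t,x) = Δψ(t,x), where Δ = ∂₁² + ∂₂² + ∂₃² acts componentwise in the spatial variables. Define F : ℝ × ℝ³ → ℂ³ by F = curl(curl ψ) − i·∂_t(curl ψ), with curl acting in the spatial variables. Then F satisfies, pointwise on ℝ × ℝ³, the anti-self-dual (complex) form of the source-free Maxwell equations: ∂_tF = i·curl F and div F = 0. (This is the Hertz-potential mechanism in the spin-1 case: a vector Hertz potential solving the wave equation generates a solution of the Maxwell equations.) -/

import Mathlib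

open MeasureTheory Real Filter

noncomputable section

abbrev E3 : Type := EuclideanSpace ℝ (Fin 3)
abbrev EC3 : Type := EuclideanSpace ℂ (Fin 3)

/-- Spatial partial derivative `∂ᵢh` of a complex-valued function on `ℝ³`. -/
def pd (i : Fin 3) (h : E3 → ℂ) (x : E3) : ℂ := fderiv ℝ h x (EuclideanSpace.single i (1 : ℝ))

/-- The curl of a complex vector field on `ℝ³`:
`curl V = (∂₂V₃ − ∂₃V₂, ∂₃V₁ − ∂₁V₃, ∂₁V₂ − ∂₂V₁)` (with 0-based indices). -/
def curlV (V : E3 → EC3) (x : E3) : EC3 :=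
  (WithLp.equiv 2 (Fin 3 → ℂ)).symm
    ![pd 1 (fun y => V y 2) x - pd 2 (fun y => V y 1) x,
      pd 2 (fun y => V y 0) x - pd 0 (fun y => V y 2) x,
      pd 0 (fun y => V y 1) x - pd 1 (fun y => V y 0) x]

/-- The divergence of a complex vector field on `ℝ³`. -/
def divV (V : E3 → EC3) (x : E3) : ℂ := ∑ i : Fin 3, pd i (fun y => V y i) x

/-- The spatial curl of a time-dependent complex vector field. -/
def curlT (V : ℝ × E3 → EC3) (p : ℝ × E3) : EC3 := curlV (fun y => V (p.1, y)) p.2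

/-- The spatial divergence of a time-dependent complex vector field. -/
def divT (V : ℝ × E3 → EC3) (p : ℝ × E3) : ℂ := divV (fun y => V (p.1, y)) p.2

/-- The time derivative `∂ₜV` of a time-dependent complex vector field. -/
def dtV (V : ℝ × E3 → EC3) (p : ℝ × E3) : EC3 := deriv (fun s => V (s, p.2)) p.1

/-- The field `F = curl (curl ψ) − i ∂ₜ (curl ψ)` generated by a Hertz potential `ψ`. -/
def hertzF (ψ : ℝ × E3 → EC3) (p : ℝ × E3) : EC3 :=
  curlT (curlT ψ) p - Complex.I • dtV (curlT ψ) p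

/-!
Put `A = curl ψ`. Derivatives commute with `curl`, so `A` again solves the wave equation, and
`div A = div curl ψ = 0`. Now `F = curl A − i ∂ₜA` is the Riemann–Silberstein vector `B + iE` of
the radiation-gauge potential `A` (`B = curl A`, `E = −∂ₜA`): `div F = −i ∂ₜ (div A) = 0`, and
`curl curl = grad div − Δ` gives `curl curl A = −ΔA = −∂ₜ²A`, which is exactly what
`∂ₜF = i curl F` asks for.
-/

namespace VectorCalculus

variable {E F G : Type*} [NormedAddCommGroup E] [NormedSpace ℝ E] [NormedAddCommGroup F]
  [NormedSpace ℝ F] [NormedAddCommGroup G] [NormedSpace ℝ G]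

section Algebra

variable (e : Fin 3 → E)

/- Curl and divergence are taken with respect to a frame `e` of three directions in an arbitrary
space (below, the spatial unit vectors of `ℝ × ℝ³`); `curlMap e` and `divMap e` compute them from
the derivative `fderiv ℝ f p`. -/

def curlMap : (E →L[ℝ] EC3) →L[ℝ] EC3 :=
  (PiLp.continuousLinearEquiv 2 ℝ (fun _ : Fin 3 => ℂ)).symm.toContinuousLinearMap ∘L
    ContinuousLinearMap.pi fun k =>
      PiLp.proj 2 _ (k + 2) ∘L ContinuousLinearMap.apply ℝ EC3 (e (k + 1)) -
        PiLp.proj 2 _ (k + 1) ∘L ContinuousLinearMap.apply ℝ EC3 (e (k + 2))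

def divMap : (E →L[ℝ] EC3) →L[ℝ] ℂ :=
  ∑ i, PiLp.proj 2 _ i ∘L ContinuousLinearMap.apply ℝ EC3 (e i)

variable {e}

@[simp]
lemma curlMap_apply (A : E →L[ℝ] EC3) (k : Fin 3) :
    curlMap e A k = A (e (k + 1)) (k + 2) - A (e (k + 2)) (k + 1) := rfl

@[simp]
lemma divMap_apply (A : E →L[ℝ] EC3) : divMap e A = ∑ i, A (e i) i := by
  simp [divMap]

lemma curlMap_smul (c : ℂ) (A : E →L[ℝ] EC3) : curlMap e (c • A) = c • curlMap e A := by
  ext k; simp [mul_sub]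

lemma divMap_smul (c : ℂ) (A : E →L[ℝ] EC3) : divMap e (c • A) = c • divMap e A := by
  simp [Finset.mul_sum]

variable {B : E →L[ℝ] E →L[ℝ] EC3}

lemma divMap_curlMap_comp (hB : ∀ u v, B u v = B v u) : divMap e (curlMap e ∘L B) = 0 := by
  simp only [divMap_apply, ContinuousLinearMap.comp_apply, curlMap_apply, Fin.isValue,
    Finset.sum_sub_distrib, Fin.sum_univ_three, Fin.reduceAdd, zero_add, hB (e 0), hB (e 1) (e 2)]
  ring

lemma curlMap_curlMap_comp (hB : ∀ u v, B u v = B v u) :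
    curlMap e (curlMap e ∘L B) =
      WithLp.toLp 2 (fun k => divMap e (B (e k))) - ∑ i, B (e i) (e i) := by
  ext k
  fin_cases k <;>
  · simp only [curlMap_apply, divMap_apply, ContinuousLinearMap.comp_apply, Fin.sum_univ_three,
      PiLp.sub_apply, PiLp.add_apply, Fin.isValue, Fin.reduceAdd, Fin.reduceFinMk, Fin.zero_eta,
      Fin.mk_one, zero_add, hB (e 0), hB (e 1) (e 2)]
    ring

end Algebra

section Calculus

def dirDeriv (v : E) (f : E → F) (p : E) : F := fderiv ℝ f p v

variable {f : E → F} {p : E}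

lemma dirDeriv_clm_comp_fderiv (L : (E →L[ℝ] F) →L[ℝ] G)
    (hf : DifferentiableAt ℝ (fderiv ℝ f) p) (u : E) :
    dirDeriv u (fun q => L (fderiv ℝ f q)) p = L (fderiv ℝ (fderiv ℝ f) p u) := by
  simp [dirDeriv, fderiv_fun_comp p L.differentiableAt hf]

lemma fderiv_clm_comp_fderiv (L : (E →L[ℝ] F) →L[ℝ] G)
    (hf : DifferentiableAt ℝ (fderiv ℝ f) p) :
    fderiv ℝ (fun q => L (fderiv ℝ f q)) p = L ∘L fderiv ℝ (fderiv ℝ f) p := by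
  ext u; exact dirDeriv_clm_comp_fderiv L hf u

lemma differentiableAt_fderiv_of_contDiffAt (hf : ContDiffAt ℝ 2 f p) :
    DifferentiableAt ℝ (fderiv ℝ f) p :=
  (hf.fderiv_right (m := 1) (by norm_num)).differentiableAt one_ne_zero

lemma dirDeriv_dirDeriv (hf : ContDiffAt ℝ 2 f p) (u v : E) :
    dirDeriv u (dirDeriv v f) p = fderiv ℝ (fderiv ℝ f) p u v :=
  dirDeriv_clm_comp_fderiv (ContinuousLinearMap.apply ℝ F v)
    (differentiableAt_fderiv_of_contDiffAt hf) u

lemma fderiv_dirDeriv (hf : ContDiffAt ℝ 2 f p) (v : E) :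
    fderiv ℝ (dirDeriv v f) p = fderiv ℝ (fderiv ℝ f) p v := by
  ext u
  rw [← dirDeriv, dirDeriv_dirDeriv hf, hf.isSymmSndFDerivAt (by simp)]

lemma dirDeriv_clm_comp_fderiv_comm (L : (E →L[ℝ] F) →L[ℝ] G) (hf : ContDiff ℝ 2 f) (u : E) :
    dirDeriv u (fun q => L (fderiv ℝ f q)) = fun q => L (fderiv ℝ (dirDeriv u f) q) := by
  funext q
  rw [dirDeriv_clm_comp_fderiv L (differentiableAt_fderiv_of_contDiffAt hf.contDiffAt),
    fderiv_dirDeriv hf.contDiffAt]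

lemma contDiff_dirDeriv {n : WithTop ℕ∞} (hf : ContDiff ℝ (n + 1) f) (v : E) :
    ContDiff ℝ n (dirDeriv v f) :=
  (ContinuousLinearMap.apply ℝ F v).contDiff.comp (hf.fderiv_right le_rfl)

lemma contDiff_clm_comp_fderiv {n : WithTop ℕ∞} (L : (E →L[ℝ] F) →L[ℝ] G)
    (hf : ContDiff ℝ (n + 1) f) : ContDiff ℝ n (fun q => L (fderiv ℝ f q)) :=
  L.contDiff.comp (hf.fderiv_right le_rfl)

lemma hasDerivAt_comp_line {a v : E} {s : ℝ} (hf : DifferentiableAt ℝ f (a + s • v)) :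
    HasDerivAt (fun s => f (a + s • v)) (dirDeriv v f (a + s • v)) s := by
  have hline : HasDerivAt (fun s : ℝ => a + s • v) v s := by
    simpa using ((hasDerivAt_id s).smul_const v).const_add a
  exact hf.hasFDerivAt.comp_hasDerivAt s hline

lemma iteratedDeriv_two_comp_line (hf : ContDiff ℝ 2 f) (a v : E) (s : ℝ) :
    iteratedDeriv 2 (fun s => f (a + s • v)) s = dirDeriv v (dirDeriv v f) (a + s • v) := by
  have hderiv : ∀ g : E → F, Differentiable ℝ g →
      deriv (fun s => g (a + s • v)) = fun s => dirDeriv v g (a + s • v) :=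
    fun g hg => funext fun s => (hasDerivAt_comp_line (hg _)).deriv
  rw [iteratedDeriv_eq_iterate, Function.iterate_succ_apply', Function.iterate_one,
    hderiv f (hf.differentiable two_ne_zero),
    hderiv _ ((contDiff_dirDeriv (n := 1) hf v).differentiable one_ne_zero)]

end Calculus

section Operators

variable (e : Fin 3 → E)

def curl (f : E → EC3) (p : E) : EC3 := curlMap e (fderiv ℝ f p)

def divergence (f : E → EC3) (p : E) : ℂ := divMap e (fderiv ℝ f p)

def grad (g : E → ℂ) (p : E) : EC3 := WithLp.toLp 2 fun k => dirDeriv (e k) g p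

def laplacian (f : E → F) : E → F := ∑ i, dirDeriv (e i) (dirDeriv (e i) f)

variable {e} {f g : E → EC3}

lemma contDiff_curl {n : WithTop ℕ∞} (hf : ContDiff ℝ (n + 1) f) : ContDiff ℝ n (curl e f) :=
  contDiff_clm_comp_fderiv _ hf

lemma dirDeriv_curl (hf : ContDiff ℝ 2 f) (u : E) :
    dirDeriv u (curl e f) = curl e (dirDeriv u f) :=
  dirDeriv_clm_comp_fderiv_comm (curlMap e) hf u

lemma dirDeriv_divergence (hf : ContDiff ℝ 2 f) (u : E) :
    dirDeriv u (divergence e f) = divergence e (dirDeriv u f) :=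
  dirDeriv_clm_comp_fderiv_comm (divMap e) hf u

lemma fderiv_curl {p : E} (hf : ContDiffAt ℝ 2 f p) :
    fderiv ℝ (curl e f) p = curlMap e ∘L fderiv ℝ (fderiv ℝ f) p :=
  fderiv_clm_comp_fderiv _ (differentiableAt_fderiv_of_contDiffAt hf)

lemma divergence_curl (hf : ContDiff ℝ 2 f) : divergence e (curl e f) = 0 := by
  funext p
  have hp := hf.contDiffAt (x := p)
  rw [divergence, fderiv_curl hp]
  exact divMap_curlMap_comp (hp.isSymmSndFDerivAt (by simp))

lemma curl_curl (hf : ContDiff ℝ 2 f) :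
    curl e (curl e f) = grad e (divergence e f) - laplacian e f := by
  funext p
  have hp := hf.contDiffAt (x := p)
  have hgrad_div : ∀ u, dirDeriv u (divergence e f) p = divMap e (fderiv ℝ (fderiv ℝ f) p u) :=
    dirDeriv_clm_comp_fderiv _ (differentiableAt_fderiv_of_contDiffAt hp)
  rw [curl, fderiv_curl hp, curlMap_curlMap_comp (hp.isSymmSndFDerivAt (by simp))]
  simp only [Pi.sub_apply, grad, laplacian, Finset.sum_apply, hgrad_div, dirDeriv_dirDeriv hp]

lemma laplacian_curl (hf : ContDiff ℝ 3 f) : laplacian e (curl e f) = curl e (laplacian e f) := by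
  have hf2 : ContDiff ℝ 2 f := hf.of_le (by norm_num)
  have hdf2 : ∀ u, ContDiff ℝ 2 (dirDeriv u f) := fun u => contDiff_dirDeriv hf u
  have hddf : ∀ u v, Differentiable ℝ (dirDeriv u (dirDeriv v f)) :=
    fun u v => (contDiff_dirDeriv (n := 1) (hdf2 v) u).differentiable one_ne_zero
  funext p
  simp only [laplacian, Finset.sum_apply, dirDeriv_curl hf2, dirDeriv_curl (hdf2 _), curl]
  rw [fderiv_sum fun i _ => (hddf _ _ p), map_sum]

lemma curl_sub_smul (hf : Differentiable ℝ f) (hg : Differentiable ℝ g) (c : ℂ) :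
    curl e (fun p => f p - c • g p) = curl e f - c • curl e g := by
  funext p
  simp only [curl]
  rw [fderiv_fun_sub (hf p) (g := fun y => c • g y) ((hg p).const_smul c),
    fderiv_fun_const_smul (hg p), map_sub, curlMap_smul]
  rfl

lemma divergence_sub_smul (hf : Differentiable ℝ f) (hg : Differentiable ℝ g) (c : ℂ) :
    divergence e (fun p => f p - c • g p) = divergence e f - c • divergence e g := by
  funext p
  simp only [divergence]
  rw [fderiv_fun_sub (hf p) (g := fun y => c • g y) ((hg p).const_smul c),
    fderiv_fun_const_smul (hg p), map_sub, divMap_smul]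
  rfl

lemma dirDeriv_sub_smul (hf : Differentiable ℝ f) (hg : Differentiable ℝ g) (c : ℂ) (u : E) :
    dirDeriv u (fun p => f p - c • g p) = dirDeriv u f - c • dirDeriv u g := by
  funext p
  simp only [dirDeriv]
  rw [fderiv_fun_sub (hf p) (g := fun y => c • g y) ((hg p).const_smul c),
    fderiv_fun_const_smul (hg p)]
  rfl

lemma wave_curl {e₀ : E} (hf : ContDiff ℝ 3 f)
    (hwave : dirDeriv e₀ (dirDeriv e₀ f) = laplacian e f) :
    dirDeriv e₀ (dirDeriv e₀ (curl e f)) = laplacian e (curl e f) := by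
  rw [dirDeriv_curl (hf.of_le (by norm_num)), dirDeriv_curl (contDiff_dirDeriv hf e₀), hwave,
    laplacian_curl hf]

end Operators

section RiemannSilberstein

variable (e : Fin 3 → E) (e₀ : E)

def riemannSilberstein (A : E → EC3) : E → EC3 := fun p => curl e A p - Complex.I • dirDeriv e₀ A p

variable {e e₀} {A : E → EC3}

lemma contDiff_riemannSilberstein {n : WithTop ℕ∞} (hA : ContDiff ℝ (n + 1) A) :
    ContDiff ℝ n (riemannSilberstein e e₀ A) :=
  (contDiff_curl hA).sub ((contDiff_dirDeriv hA e₀).const_smul Complex.I)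

lemma divergence_riemannSilberstein (hA : ContDiff ℝ 2 A) (hdiv : divergence e A = 0) :
    divergence e (riemannSilberstein e e₀ A) = 0 := by
  have hcurl : Differentiable ℝ (curl e A) := (contDiff_curl (n := 1) hA).differentiable one_ne_zero
  have hdt : Differentiable ℝ (dirDeriv e₀ A) :=
    (contDiff_dirDeriv (n := 1) hA e₀).differentiable one_ne_zero
  unfold riemannSilberstein
  rw [divergence_sub_smul hcurl hdt, divergence_curl hA, ← dirDeriv_divergence hA, hdiv]
  funext p
  simp [dirDeriv]

lemma dirDeriv_riemannSilberstein (hA : ContDiff ℝ 2 A) (hdiv : divergence e A = 0)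
    (hwave : dirDeriv e₀ (dirDeriv e₀ A) = laplacian e A) :
    dirDeriv e₀ (riemannSilberstein e e₀ A) = Complex.I • curl e (riemannSilberstein e e₀ A) := by
  have hcurl : Differentiable ℝ (curl e A) := (contDiff_curl (n := 1) hA).differentiable one_ne_zero
  have hdt : Differentiable ℝ (dirDeriv e₀ A) :=
    (contDiff_dirDeriv (n := 1) hA e₀).differentiable one_ne_zero
  have hcurlcurl : curl e (curl e A) = -laplacian e A := by
    rw [curl_curl hA, hdiv]
    ext p k
    simp [grad, dirDeriv]
  unfold riemannSilberstein
  rw [dirDeriv_sub_smul hcurl hdt, curl_sub_smul hcurl hdt, hwave,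
    dirDeriv_curl hA, hcurlcurl, smul_sub, smul_smul, Complex.I_mul_I, smul_neg]
  module

end RiemannSilberstein

end VectorCalculus

open VectorCalculus

namespace Spacetime

def timeDir : ℝ × E3 := (1, 0)

def spaceDir (i : Fin 3) : ℝ × E3 := (0, EuclideanSpace.single i 1)

variable {f : ℝ × E3 → EC3}

lemma pd_slice_apply {t : ℝ} {x : E3} (hf : DifferentiableAt ℝ f (t, x)) (i k : Fin 3) :
    pd i (fun y => f (t, y) k) x = dirDeriv (spaceDir i) f (t, x) k := by
  have h := ((PiLp.proj (𝕜 := ℝ) 2 (fun _ : Fin 3 => ℂ) k).hasFDerivAt.comp x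
    (hf.hasFDerivAt.comp x (hasFDerivAt_prodMk_right t x))).fderiv
  simp only [Function.comp_def, PiLp.proj_apply] at h
  simp [pd, dirDeriv, spaceDir, h]

lemma curlT_eq_curl (hf : Differentiable ℝ f) : curlT f = curl spaceDir f := by
  funext ⟨t, x⟩
  ext k
  fin_cases k <;> simp [curlT, curlV, curl, dirDeriv, pd_slice_apply (hf _)]

lemma divT_eq_divergence (hf : Differentiable ℝ f) : divT f = divergence spaceDir f := by
  funext ⟨t, x⟩
  simp [divT, divV, divergence, dirDeriv, pd_slice_apply (hf _)]

lemma dtV_eq_dirDeriv (hf : Differentiable ℝ f) : dtV f = dirDeriv timeDir f := by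
  funext ⟨t, x⟩
  have h := (hasDerivAt_comp_line (f := f) (a := ((0 : ℝ), x)) (v := timeDir) (s := t) (hf _)).deriv
  simpa [dtV, timeDir] using h

lemma wave_of_iteratedDeriv (hf : ContDiff ℝ 2 f)
    (hwave : ∀ (t : ℝ) (x : E3),
      iteratedDeriv 2 (fun s : ℝ => f (s, x)) t =
        ∑ i : Fin 3,
          iteratedDeriv 2 (fun s : ℝ => f (t, x + s • EuclideanSpace.single i (1 : ℝ))) 0) :
    dirDeriv timeDir (dirDeriv timeDir f) = laplacian spaceDir f := by
  funext ⟨t, x⟩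
  have htime : iteratedDeriv 2 (fun s => f (s, x)) t =
      dirDeriv timeDir (dirDeriv timeDir f) (t, x) := by
    simpa [timeDir] using iteratedDeriv_two_comp_line hf ((0 : ℝ), x) timeDir t
  have hspace : ∀ i,
      iteratedDeriv 2 (fun s : ℝ => f (t, x + s • EuclideanSpace.single i (1 : ℝ))) 0 =
        dirDeriv (spaceDir i) (dirDeriv (spaceDir i) f) (t, x) := fun i => by
    simpa [spaceDir] using iteratedDeriv_two_comp_line hf (t, x) (spaceDir i) 0
  rw [← htime, hwave, laplacian, Finset.sum_apply]
  exact Finset.sum_congr rfl fun i _ => hspace i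

end Spacetime

open Spacetime

theorem stmt18 (ψ : ℝ × E3 → EC3) (hψ : ContDiff ℝ 3 ψ)
    (hwave : ∀ (t : ℝ) (x : E3),
      iteratedDeriv 2 (fun s : ℝ => ψ (s, x)) t =
        ∑ i : Fin 3,
          iteratedDeriv 2 (fun s : ℝ => ψ (t, x + s • EuclideanSpace.single i (1 : ℝ))) 0) :
    (∀ p : ℝ × E3, dtV (hertzF ψ) p = Complex.I • curlT (hertzF ψ) p) ∧
      ∀ p : ℝ × E3, divT (hertzF ψ) p = 0 := by
  have hψ2 : ContDiff ℝ 2 ψ := hψ.of_le (by norm_num)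
  have hA : ContDiff ℝ 2 (curl spaceDir ψ) := contDiff_curl hψ
  have hAd : Differentiable ℝ (curl spaceDir ψ) := hA.differentiable two_ne_zero
  have hF : hertzF ψ = riemannSilberstein spaceDir timeDir (curl spaceDir ψ) := by
    funext p
    rw [hertzF, curlT_eq_curl (hψ2.differentiable two_ne_zero), curlT_eq_curl hAd,
      dtV_eq_dirDeriv hAd]
    rfl
  have hFd : Differentiable ℝ (hertzF ψ) :=
    hF ▸ (contDiff_riemannSilberstein (n := 1) hA).differentiable one_ne_zero
  have hdiv := divergence_curl (e := spaceDir) hψ2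
  have hwaveA := wave_curl hψ (wave_of_iteratedDeriv hψ2 hwave)
  refine ⟨fun p => ?_, fun p => ?_⟩
  · rw [dtV_eq_dirDeriv hFd, curlT_eq_curl hFd, hF]
    exact congrFun (dirDeriv_riemannSilberstein hA hdiv hwaveA) p
  · rw [divT_eq_divergence hFd, hF]
    exact congrFun (divergence_riemannSilberstein hA hdiv) p
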